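/- The unitary U_d satisfies (⟨0|⊗⟨0|⊗⟨0|⊗I_N) U_d (|0⟩⊗|0⟩⊗|0⟩⊗e_{N−1}) = (1/4)(e_{N−2} − 2 e_{N−1}). -/

import Mathlib

open Matrix
open scoped Kronecker

noncomputable section

instance instNeZeroPow2 (n : ℕ) : NeZero (2 ^ n) := ⟨pow_ne_zero n two_ne_zero⟩

/-- Cyclic left shift: `Sm • e_j = e_{j-1 mod N}`, i.e. `(Sm)_{i j} = [i = j - 1]`. -/
def Sm (N : ℕ) [NeZero N] : Matrix (Fin N) (Fin N) ℂ :=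
  Matrix.of fun i j => if i = j - 1 then 1 else 0

/-- Cyclic right shift: `Sp • e_j = e_{j+1 mod N}`. -/
def Sp (N : ℕ) [NeZero N] : Matrix (Fin N) (Fin N) ℂ :=
  Matrix.of fun i j => if i = j + 1 then 1 else 0

/-- The index `N - 1` of the last grid point. -/
def fLast (N : ℕ) [NeZero N] : Fin N := ⟨N - 1, Nat.sub_lt (Nat.pos_of_neZero N) Nat.one_pos⟩

def Hgate : Matrix (Fin 2) (Fin 2) ℂ := ((1 / Real.sqrt 2 : ℝ) : ℂ) • !![1, 1; 1, -1]
def Zgate : Matrix (Fin 2) (Fin 2) ℂ := !![1, 0; 0, -1]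
def Xgate : Matrix (Fin 2) (Fin 2) ℂ := !![0, 1; 1, 0]
def P0 : Matrix (Fin 2) (Fin 2) ℂ := !![1, 0; 0, 0]
def P1 : Matrix (Fin 2) (Fin 2) ℂ := !![0, 0; 0, 1]

/-- Controlled flip `F(Q) = X ⊗ Q + I₂ ⊗ (I − Q)` for a projector `Q`. -/
def Fctrl {α : Type*} [DecidableEq α] [Fintype α] (Q : Matrix α α ℂ) :
    Matrix (Fin 2 × α) (Fin 2 × α) ℂ :=
  Xgate ⊗ₖ Q + (1 : Matrix (Fin 2) (Fin 2) ℂ) ⊗ₖ ((1 : Matrix α α ℂ) - Q)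

/-- `C₋ = I₂ ⊗ (|0⟩⟨0| ⊗ I₂ ⊗ S⁻ + |1⟩⟨1| ⊗ I₂ ⊗ I_N)` on `del, ℓ₁, ℓ₀, j`. -/
def Cminus3 (N : ℕ) [NeZero N] :
    Matrix (Fin 2 × Fin 2 × Fin 2 × Fin N) (Fin 2 × Fin 2 × Fin 2 × Fin N) ℂ :=
  (1 : Matrix (Fin 2) (Fin 2) ℂ) ⊗ₖ
    (P0 ⊗ₖ ((1 : Matrix (Fin 2) (Fin 2) ℂ) ⊗ₖ Sm N) +
     P1 ⊗ₖ ((1 : Matrix (Fin 2) (Fin 2) ℂ) ⊗ₖ (1 : Matrix (Fin N) (Fin N) ℂ)))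

/-- `C₊ = I₂ ⊗ I₂ ⊗ (|1⟩⟨1| ⊗ S⁺ + |0⟩⟨0| ⊗ I_N)` on `del, ℓ₁, ℓ₀, j`. -/
def Cplus3 (N : ℕ) [NeZero N] :
    Matrix (Fin 2 × Fin 2 × Fin 2 × Fin N) (Fin 2 × Fin 2 × Fin 2 × Fin N) ℂ :=
  (1 : Matrix (Fin 2) (Fin 2) ℂ) ⊗ₖ ((1 : Matrix (Fin 2) (Fin 2) ℂ) ⊗ₖ
    (P1 ⊗ₖ Sp N + P0 ⊗ₖ (1 : Matrix (Fin N) (Fin N) ℂ)))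

/-- `B₀ = F(|0⟩⟨0| ⊗ |0⟩⟨0| ⊗ e₀e₀ᵀ)`. -/
def B00 (N : ℕ) [NeZero N] :
    Matrix (Fin 2 × Fin 2 × Fin 2 × Fin N) (Fin 2 × Fin 2 × Fin 2 × Fin N) ℂ :=
  Fctrl (P0 ⊗ₖ (P0 ⊗ₖ Matrix.single (0 : Fin N) (0 : Fin N) (1 : ℂ)))

/-- `B₂ = F(|0⟩⟨0| ⊗ |1⟩⟨1| ⊗ e₀e₀ᵀ)`. -/
def B01 (N : ℕ) [NeZero N] :
    Matrix (Fin 2 × Fin 2 × Fin 2 × Fin N) (Fin 2 × Fin 2 × Fin 2 × Fin N) ℂ :=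
  Fctrl (P0 ⊗ₖ (P1 ⊗ₖ Matrix.single (0 : Fin N) (0 : Fin N) (1 : ℂ)))

/-- `B_{N−1} = F(|1⟩⟨1| ⊗ |1⟩⟨1| ⊗ e_{N−1}e_{N−1}ᵀ)`. -/
def B11L (N : ℕ) [NeZero N] :
    Matrix (Fin 2 × Fin 2 × Fin 2 × Fin N) (Fin 2 × Fin 2 × Fin 2 × Fin N) ℂ :=
  Fctrl (P1 ⊗ₖ (P1 ⊗ₖ Matrix.single (fLast N) (fLast N) (1 : ℂ)))

/-- `B₄ = F(|0⟩⟨0| ⊗ |1⟩⟨1| ⊗ e_{N−1}e_{N−1}ᵀ)`. -/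
def B01L (N : ℕ) [NeZero N] :
    Matrix (Fin 2 × Fin 2 × Fin 2 × Fin N) (Fin 2 × Fin 2 × Fin 2 × Fin N) ℂ :=
  Fctrl (P0 ⊗ₖ (P1 ⊗ₖ Matrix.single (fLast N) (fLast N) (1 : ℂ)))

/-- `I₂ ⊗ A ⊗ A ⊗ I_N` for a single-qubit gate `A`. -/
def sandwich (N : ℕ) [NeZero N] (A : Matrix (Fin 2) (Fin 2) ℂ) :
    Matrix (Fin 2 × Fin 2 × Fin 2 × Fin N) (Fin 2 × Fin 2 × Fin 2 × Fin N) ℂ :=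
  (1 : Matrix (Fin 2) (Fin 2) ℂ) ⊗ₖ (A ⊗ₖ (A ⊗ₖ (1 : Matrix (Fin N) (Fin N) ℂ)))

/-- `U_d = (I₂⊗H⊗H⊗I) · C₊ · C₋ · B_{N−1} · B₀ · (I₂⊗Z⊗Z⊗I) · (I₂⊗H⊗H⊗I)`. -/
def Ud (N : ℕ) [NeZero N] :
    Matrix (Fin 2 × Fin 2 × Fin 2 × Fin N) (Fin 2 × Fin 2 × Fin 2 × Fin N) ℂ :=
  sandwich N Hgate * Cplus3 N * Cminus3 N * B11L N * B00 N * sandwich N Zgate * sandwich N Hgate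

/-- `U_n = (I₂⊗H⊗H⊗I) · C₊ · C₋ · B₄ · B₃ · B₂ · B₁ · (I₂⊗Z⊗Z⊗I) · (I₂⊗H⊗H⊗I)`. -/
def Un (N : ℕ) [NeZero N] :
    Matrix (Fin 2 × Fin 2 × Fin 2 × Fin N) (Fin 2 × Fin 2 × Fin 2 × Fin N) ℂ :=
  sandwich N Hgate * Cplus3 N * Cminus3 N * B01L N * B11L N * B01 N * B00 N *
    sandwich N Zgate * sandwich N Hgate

/-- The standard basis vector `e_i` of `ℂ^N`. -/
def eVec (N : ℕ) (i : Fin N) : Fin N → ℂ := Pi.single i 1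

/-!
On `|000⟩ e_{N-1}`, the Hadamards followed by `Z ⊗ Z` prepare `½(|00⟩ - |01⟩ - |10⟩ + |11⟩)` on
`ℓ₁ ℓ₀`. Every later gate except the final Hadamards permutes basis states: `B₀` is trivial since
`N - 1 ≠ 0`, `B_{N-1}` sets `del` only on `|11⟩ e_{N-1}`, `C₋` shifts `j` down when `ℓ₁ = 0` and
`C₊` shifts it up when `ℓ₀ = 1`. This gives
`½(|000⟩ e_{N-2} - |001⟩ e_{N-1} - |010⟩ e_{N-1} + |111⟩ e_0)`, and the final Hadamards send each
`del = 0` term to `⟨000|` with amplitude `½`.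
-/

/-- The Kronecker product of vectors, indexed like `⊗ₖ` (`Matrix.vec` uses the opposite order). -/
def vecKron {α β R : Type*} [Mul R] (v : α → R) (w : β → R) : α × β → R :=
  fun p => v p.1 * w p.2

infixr:75 " ⊗ᵥ " => vecKron

section VecKron

variable {α β m n R : Type*}

@[simp]
lemma vecKron_apply [Mul R] (v : α → R) (w : β → R) (p : α × β) :
    (v ⊗ᵥ w) p = v p.1 * w p.2 :=
  rfl

@[simp]
lemma zero_vecKron [MulZeroClass R] (w : β → R) : (0 : α → R) ⊗ᵥ w = 0 := by
  ext; simp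

@[simp]
lemma vecKron_zero [MulZeroClass R] (v : α → R) : v ⊗ᵥ (0 : β → R) = 0 := by
  ext; simp

lemma add_vecKron [Distrib R] (u v : α → R) (w : β → R) :
    (u + v) ⊗ᵥ w = u ⊗ᵥ w + v ⊗ᵥ w := by
  ext; simp [add_mul]

lemma vecKron_add [Distrib R] (u : α → R) (v w : β → R) :
    u ⊗ᵥ (v + w) = u ⊗ᵥ v + u ⊗ᵥ w := by
  ext; simp [mul_add]

lemma smul_vecKron [Semigroup R] (c : R) (v : α → R) (w : β → R) :
    (c • v) ⊗ᵥ w = c • (v ⊗ᵥ w) := by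
  ext; simp [mul_assoc]

lemma vecKron_smul [CommSemigroup R] (c : R) (v : α → R) (w : β → R) :
    v ⊗ᵥ (c • w) = c • (v ⊗ᵥ w) := by
  ext; simp [mul_left_comm]

lemma single_vecKron_single [DecidableEq α] [DecidableEq β] [MulZeroOneClass R] (i : α) (j : β) :
    Pi.single i (1 : R) ⊗ᵥ Pi.single j 1 = Pi.single (i, j) 1 := by
  ext ⟨a, b⟩
  by_cases ha : a = i <;> by_cases hb : b = j <;> simp [ha, hb]

lemma kronecker_mulVec_vecKron [CommSemiring R] [Fintype m] [Fintype n]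
    (A : Matrix α m R) (B : Matrix β n R) (v : m → R) (w : n → R) :
    (A ⊗ₖ B) *ᵥ (v ⊗ᵥ w) = (A *ᵥ v) ⊗ᵥ (B *ᵥ w) := by
  ext ⟨a, b⟩
  simp only [mulVec, dotProduct, vecKron_apply, kroneckerMap_apply, Fintype.sum_prod_type,
    Finset.sum_mul_sum]
  exact Finset.sum_congr rfl fun _ _ => Finset.sum_congr rfl fun _ _ => by ring

end VecKron

section SingleMulVec

variable {ι R : Type*} [Fintype ι] [DecidableEq ι] [Semiring R]

lemma single_mulVec_single_of_ne {i j : ι} (h : j ≠ i) :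
    Matrix.single i i (1 : R) *ᵥ Pi.single j 1 = 0 := by
  rw [single_mulVec_eq, Pi.single_eq_of_ne h.symm, mul_zero, zero_smul]

lemma single_mulVec_single_self (i : ι) :
    Matrix.single i i (1 : R) *ᵥ Pi.single i 1 = Pi.single i 1 := by
  rw [single_mulVec_eq, Pi.single_eq_same, mul_one, one_smul]

end SingleMulVec

lemma Fctrl_mulVec_vecKron_of_mulVec_eq_zero {α : Type*} [DecidableEq α] [Fintype α]
    {Q : Matrix α α ℂ} {v : α → ℂ} (hQ : Q *ᵥ v = 0) (u : Fin 2 → ℂ) :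
    Fctrl Q *ᵥ (u ⊗ᵥ v) = u ⊗ᵥ v := by
  simp [Fctrl, add_mulVec, sub_mulVec, kronecker_mulVec_vecKron, hQ]

lemma Fctrl_mulVec_vecKron_of_mulVec_eq_self {α : Type*} [DecidableEq α] [Fintype α]
    {Q : Matrix α α ℂ} {v : α → ℂ} (hQ : Q *ᵥ v = v) (u : Fin 2 → ℂ) :
    Fctrl Q *ᵥ (u ⊗ᵥ v) = (Xgate *ᵥ u) ⊗ᵥ v := by
  simp [Fctrl, add_mulVec, sub_mulVec, kronecker_mulVec_vecKron, hQ]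

local notation "e₀" => (Pi.single (0 : Fin 2) (1 : ℂ))
local notation "e₁" => (Pi.single (1 : Fin 2) (1 : ℂ))

lemma P0_mulVec_single_zero : P0 *ᵥ e₀ = e₀ := by ext i; fin_cases i <;> simp [P0]
lemma P0_mulVec_single_one : P0 *ᵥ e₁ = 0 := by ext i; fin_cases i <;> simp [P0]
lemma P1_mulVec_single_zero : P1 *ᵥ e₀ = 0 := by ext i; fin_cases i <;> simp [P1]
lemma P1_mulVec_single_one : P1 *ᵥ e₁ = e₁ := by ext i; fin_cases i <;> simp [P1]
lemma Xgate_mulVec_single_zero : Xgate *ᵥ e₀ = e₁ := by ext i; fin_cases i <;> simp [Xgate]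

lemma Zgate_mulVec_single (b : Fin 2) :
    Zgate *ᵥ Pi.single b 1 = (-1 : ℂ) ^ (b : ℕ) • Pi.single b 1 := by
  ext i; fin_cases b <;> fin_cases i <;> simp [Zgate]

lemma Hgate_mulVec_single_zero :
    Hgate *ᵥ e₀ = ((1 / Real.sqrt 2 : ℝ) : ℂ) • (e₀ + e₁) := by
  ext i; fin_cases i <;> simp [Hgate]

lemma Hgate_mulVec_single_apply_zero (b : Fin 2) :
    (Hgate *ᵥ Pi.single b 1) 0 = ((1 / Real.sqrt 2 : ℝ) : ℂ) := by
  fin_cases b <;> simp [Hgate]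

lemma invSqrtTwo_mul_self : ((1 / Real.sqrt 2 : ℝ) : ℂ) * ((1 / Real.sqrt 2 : ℝ) : ℂ) = 1 / 2 := by
  rw [← Complex.ofReal_mul, div_mul_div_comm, Real.mul_self_sqrt zero_le_two]
  norm_num

section Circuit

variable {N : ℕ}

/-- The basis state `|a⟩ ⊗ |b⟩ ⊗ |c⟩ ⊗ e_j` of the registers `del, ℓ₁, ℓ₀, j`. -/
def ket (a b c : Fin 2) (j : Fin N) : Fin 2 × Fin 2 × Fin 2 × Fin N → ℂ :=
  Pi.single a 1 ⊗ᵥ Pi.single b 1 ⊗ᵥ Pi.single c 1 ⊗ᵥ Pi.single j 1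

lemma mulVec_ket_apply {ι : Type*} (M : Matrix ι (Fin 2 × Fin 2 × Fin 2 × Fin N) ℂ)
    (a b c : Fin 2) (j : Fin N) (x : ι) : (M *ᵥ ket a b c j) x = M x (a, b, c, j) := by
  rw [ket, single_vecKron_single, single_vecKron_single, single_vecKron_single,
    mulVec_single_one, col_apply]

variable [NeZero N]

lemma Sm_mulVec_single (j : Fin N) : Sm N *ᵥ Pi.single j 1 = Pi.single (j - 1) 1 := by
  ext i; simp [Sm, Pi.single_apply]

lemma Sp_mulVec_single (j : Fin N) : Sp N *ᵥ Pi.single j 1 = Pi.single (j + 1) 1 := by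
  ext i; simp [Sp, Pi.single_apply]

lemma sandwich_mulVec_ket (A : Matrix (Fin 2) (Fin 2) ℂ) (a b c : Fin 2) (j : Fin N) :
    sandwich N A *ᵥ ket a b c j
      = Pi.single a 1 ⊗ᵥ (A *ᵥ Pi.single b 1) ⊗ᵥ (A *ᵥ Pi.single c 1) ⊗ᵥ Pi.single j 1 := by
  simp only [sandwich, ket, kronecker_mulVec_vecKron, one_mulVec]

lemma sandwich_Hgate_mulVec_ket_zero (j : Fin N) :
    sandwich N Hgate *ᵥ ket 0 0 0 j
      = (1 / 2 : ℂ) • (ket 0 0 0 j + ket 0 0 1 j + ket 0 1 0 j + ket 0 1 1 j) := by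
  rw [sandwich_mulVec_ket, Hgate_mulVec_single_zero]
  simp only [add_vecKron, vecKron_add, smul_vecKron, vecKron_smul]
  rw [← smul_add, smul_smul, invSqrtTwo_mul_self, ket, ket, ket, ket]
  module

lemma sandwich_Hgate_mulVec_ket_apply (b c : Fin 2) (i j : Fin N) :
    (sandwich N Hgate *ᵥ ket 0 b c j) (0, 0, 0, i) = 1 / 2 * eVec N j i := by
  rw [sandwich_mulVec_ket]
  simp only [vecKron_apply, Hgate_mulVec_single_apply_zero, ← invSqrtTwo_mul_self, eVec,
    Pi.single_eq_same, one_mul, mul_assoc]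

lemma sandwich_Hgate_mulVec_ket_one_apply (b c : Fin 2) (i j : Fin N) :
    (sandwich N Hgate *ᵥ ket 1 b c j) (0, 0, 0, i) = 0 := by
  rw [sandwich_mulVec_ket, vecKron_apply, Pi.single_eq_of_ne zero_ne_one, zero_mul]

lemma sandwich_Zgate_mulVec_ket (a b c : Fin 2) (j : Fin N) :
    sandwich N Zgate *ᵥ ket a b c j = (-1 : ℂ) ^ ((b : ℕ) + c) • ket a b c j := by
  rw [sandwich_mulVec_ket]
  simp only [Zgate_mulVec_single, smul_vecKron, vecKron_smul, smul_smul, pow_add, ket, mul_comm]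

lemma sandwich_Zgate_Hgate_mulVec_ket_zero (j : Fin N) :
    sandwich N Zgate *ᵥ (sandwich N Hgate *ᵥ ket 0 0 0 j)
      = (1 / 2 : ℂ) • (ket 0 0 0 j - ket 0 0 1 j - ket 0 1 0 j + ket 0 1 1 j) := by
  simp only [sandwich_Hgate_mulVec_ket_zero, mulVec_smul, mulVec_add, sandwich_Zgate_mulVec_ket,
    Fin.val_zero, Fin.val_one, add_zero, zero_add, pow_zero, pow_one, one_smul]
  module

lemma B00_mulVec_ket_of_ne_zero (a b c : Fin 2) {j : Fin N} (hj : j ≠ 0) :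
    B00 N *ᵥ ket a b c j = ket a b c j := by
  refine Fctrl_mulVec_vecKron_of_mulVec_eq_zero ?_ _
  simp only [kronecker_mulVec_vecKron, single_mulVec_single_of_ne hj, vecKron_zero]

lemma B11L_mulVec_ket_eq_self (a b c : Fin 2) (j : Fin N)
    (h : b = 0 ∨ c = 0 ∨ j ≠ fLast N) :
    B11L N *ᵥ ket a b c j = ket a b c j := by
  refine Fctrl_mulVec_vecKron_of_mulVec_eq_zero ?_ _
  rcases h with rfl | rfl | hj
  · simp only [kronecker_mulVec_vecKron, P1_mulVec_single_zero, zero_vecKron]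
  · simp only [kronecker_mulVec_vecKron, P1_mulVec_single_zero, zero_vecKron, vecKron_zero]
  · simp only [kronecker_mulVec_vecKron, single_mulVec_single_of_ne hj, vecKron_zero]

lemma B11L_mulVec_ket_fLast :
    B11L N *ᵥ ket 0 1 1 (fLast N) = ket 1 1 1 (fLast N) := by
  rw [ket, B11L, Fctrl_mulVec_vecKron_of_mulVec_eq_self, Xgate_mulVec_single_zero, ket]
  simp only [kronecker_mulVec_vecKron, P1_mulVec_single_one, single_mulVec_single_self]

lemma Cminus3_mulVec_ket_zero (a c : Fin 2) (j : Fin N) :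
    Cminus3 N *ᵥ ket a 0 c j = ket a 0 c (j - 1) := by
  simp only [Cminus3, ket, add_mulVec, kronecker_mulVec_vecKron, one_mulVec, P0_mulVec_single_zero,
    P1_mulVec_single_zero, Sm_mulVec_single, zero_vecKron, add_zero]

lemma Cminus3_mulVec_ket_one (a c : Fin 2) (j : Fin N) :
    Cminus3 N *ᵥ ket a 1 c j = ket a 1 c j := by
  simp only [Cminus3, ket, add_mulVec, kronecker_mulVec_vecKron, one_mulVec, P0_mulVec_single_one,
    P1_mulVec_single_one, zero_vecKron, zero_add]

lemma Cplus3_mulVec_ket_zero (a b : Fin 2) (j : Fin N) :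
    Cplus3 N *ᵥ ket a b 0 j = ket a b 0 j := by
  simp only [Cplus3, ket, add_mulVec, kronecker_mulVec_vecKron, one_mulVec, P0_mulVec_single_zero,
    P1_mulVec_single_zero, zero_vecKron, zero_add]

lemma Cplus3_mulVec_ket_one (a b : Fin 2) (j : Fin N) :
    Cplus3 N *ᵥ ket a b 1 j = ket a b 1 (j + 1) := by
  simp only [Cplus3, ket, add_mulVec, kronecker_mulVec_vecKron, one_mulVec, P0_mulVec_single_one,
    P1_mulVec_single_one, Sp_mulVec_single, zero_vecKron, add_zero]

lemma fLast_add_one : fLast N + 1 = 0 := by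
  ext
  simp [fLast, Fin.val_add, Nat.sub_add_cancel NeZero.one_le]

lemma fLast_ne_zero (hN : 1 < N) : fLast N ≠ 0 := by
  simp only [Ne, Fin.ext_iff, fLast, Fin.val_zero]
  omega

lemma fLast_sub_one_val (hN : 1 < N) : (fLast N - 1).val = N - 2 := by
  rw [Fin.sub_val_of_le] <;> simp [fLast, Fin.le_def, Nat.mod_eq_of_lt hN] <;> omega

theorem Ud_mulVec_ket_fLast (hN : 1 < N) :
    Ud N *ᵥ ket 0 0 0 (fLast N) = (1 / 2 : ℂ) • (sandwich N Hgate *ᵥ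
      (ket 0 0 0 (fLast N - 1) - ket 0 0 1 (fLast N) - ket 0 1 0 (fLast N) + ket 1 1 1 0)) := by
  have hL : fLast N ≠ 0 := fLast_ne_zero hN
  calc Ud N *ᵥ ket 0 0 0 (fLast N)
      = sandwich N Hgate *ᵥ (Cplus3 N *ᵥ (Cminus3 N *ᵥ (B11L N *ᵥ (B00 N *ᵥ ((1 / 2 : ℂ) •
          (ket 0 0 0 (fLast N) - ket 0 0 1 (fLast N) - ket 0 1 0 (fLast N)
            + ket 0 1 1 (fLast N))))))) := by
        simp only [Ud, ← mulVec_mulVec, sandwich_Zgate_Hgate_mulVec_ket_zero]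
    _ = sandwich N Hgate *ᵥ (Cplus3 N *ᵥ (Cminus3 N *ᵥ ((1 / 2 : ℂ) •
          (ket 0 0 0 (fLast N) - ket 0 0 1 (fLast N) - ket 0 1 0 (fLast N)
            + ket 1 1 1 (fLast N))))) := by
        simp only [mulVec_smul, mulVec_add, mulVec_sub, B00_mulVec_ket_of_ne_zero _ _ _ hL,
          B11L_mulVec_ket_eq_self, B11L_mulVec_ket_fLast, true_or, or_true]
    _ = sandwich N Hgate *ᵥ ((1 / 2 : ℂ) •
          (ket 0 0 0 (fLast N - 1) - ket 0 0 1 (fLast N) - ket 0 1 0 (fLast N) + ket 1 1 1 0)) := by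
        simp only [mulVec_smul, mulVec_add, mulVec_sub, Cminus3_mulVec_ket_zero,
          Cminus3_mulVec_ket_one, Cplus3_mulVec_ket_zero, Cplus3_mulVec_ket_one, sub_add_cancel,
          fLast_add_one]
    _ = _ := mulVec_smul _ _ _

theorem Ud_apply_zero_fLast (hN : 1 < N) :
    (fun i : Fin N => Ud N (0, 0, 0, i) (0, 0, 0, fLast N))
      = (1 / 4 : ℂ) • (eVec N (fLast N - 1) - (2 : ℂ) • eVec N (fLast N)) := by
  funext i
  rw [← mulVec_ket_apply (Ud N), Ud_mulVec_ket_fLast hN]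
  simp only [mulVec_add, mulVec_sub, Pi.smul_apply, Pi.add_apply, Pi.sub_apply, smul_eq_mul,
    sandwich_Hgate_mulVec_ket_apply, sandwich_Hgate_mulVec_ket_one_apply]
  ring

end Circuit

/-- `(⟨0|⊗⟨0|⊗⟨0|⊗I) U_d (|0⟩⊗|0⟩⊗|0⟩⊗e_{N−1}) = (1/4)(e_{N−2} − 2e_{N−1})`. -/
theorem ud_right_boundary_action (n : ℕ) (hn : 1 ≤ n) :
    (fun i : Fin (2 ^ n) =>
        Ud (2 ^ n) ((0 : Fin 2), (0 : Fin 2), (0 : Fin 2), i)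
          ((0 : Fin 2), (0 : Fin 2), (0 : Fin 2), fLast (2 ^ n)))
      = (1 / 4 : ℂ) •
          (eVec (2 ^ n)
              ⟨2 ^ n - 2, (by have := Nat.one_lt_two_pow_iff.mpr (by omega : n ≠ 0); omega)⟩
            - (2 : ℂ) • eVec (2 ^ n) (fLast (2 ^ n))) := by
  have hN : 1 < 2 ^ n := Nat.one_lt_two_pow (by omega)
  rw [Ud_apply_zero_fLast hN]
  congr
  exact Fin.ext (fLast_sub_one_val hN)
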